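/- arXiv:2004.02635 — 3 statements merged into one kernel-verified Lean document; each statement's English description precedes it below -/
import Mathlib

section
/- Let Z be a finite-dimensional real inner product space and Ã, B̃ : Z → Z single-valued maps (interpreted as selections of monotone operators), C̃ : Z → Z a map, and γ > 0. Suppose z^k = v^k - γ b^k with b^k = B̃(z^k), u^{k+1} = v^k - 2γ b^k - γ C̃(z^k) - γ a^{k+1} with a^{k+1} = Ã(u^{k+1}), and v^{k+1} = v^k + u^{k+1} - z^k. Suppose similarly z⋆ = v⋆ - γ b⋆, u⋆ = v⋆ - 2γ b⋆ - γ C̃(z⋆) - γ a⋆, and v⋆ = v⋆ + u⋆ - z⋆ (so u⋆ = z⋆). Then ‖v^{k+1} - v⋆‖² = ‖v^k - v⋆‖² - 2γ⟨b^k - b⋆, z^k - z⋆⟩ - 2γ⟨C̃(z^k) - C̃(z⋆), z^k - z⋆⟩ - 2γ⟨a^{k+1} - a⋆, u^{k+1} - u⋆⟩ - γ²‖a^{k+1} + b^k - (a⋆ + b⋆)‖² + γ²‖C̃(z^k) - C̃(z⋆)‖². -/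
open scoped InnerProductSpace

private lemma davis_yin_key {Z : Type*} [NormedAddCommGroup Z] [InnerProductSpace ℝ Z]
    (w a b c : Z) (γ : ℝ) :
    ‖w - γ•(a+b) - γ•c‖^2
      = ‖w‖^2 - 2*γ*⟪b, w - γ•b⟫_ℝ - 2*γ*⟪c, w - γ•b⟫_ℝ
        - 2*γ*⟪a, w - (2*γ)•b - γ•c - γ•a⟫_ℝ
        - γ^2*‖a+b‖^2 + γ^2*‖c‖^2 := by
  simp only [← real_inner_self_eq_norm_sq]
  simp only [inner_sub_left, inner_sub_right, inner_add_left, inner_add_right,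
    real_inner_smul_left, real_inner_smul_right]
  ring_nf
  linear_combination γ * real_inner_comm w a + γ * real_inner_comm w b +
    γ * real_inner_comm w c + γ^2 * real_inner_comm a c +
    2*γ^2 * real_inner_comm a b - γ^2 * real_inner_comm b c

/-- Fundamental equality of the Davis--Yin algorithm (Lemma 3 of the paper). -/
theorem davis_yin_fundamental_equality
    {Z : Type*} [NormedAddCommGroup Z] [InnerProductSpace ℝ Z] [FiniteDimensional ℝ Z]
    (A B C : Z → Z) (γ : ℝ) (hγ : 0 < γ)
    (vk zk uk1 vk1 vs zs us : Z)
    (h1 : zk = vk - γ • B zk)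
    (h2 : uk1 = vk - (2 * γ) • B zk - γ • C zk - γ • A uk1)
    (h3 : vk1 = vk + uk1 - zk)
    (h1s : zs = vs - γ • B zs)
    (h2s : us = vs - (2 * γ) • B zs - γ • C zs - γ • A us)
    (h3s : vs = vs + us - zs) :
    ‖vk1 - vs‖ ^ 2
      = ‖vk - vs‖ ^ 2
        - 2 * γ * ⟪B zk - B zs, zk - zs⟫_ℝ
        - 2 * γ * ⟪C zk - C zs, zk - zs⟫_ℝ
        - 2 * γ * ⟪A uk1 - A us, uk1 - us⟫_ℝ
        - γ ^ 2 * ‖A uk1 + B zk - (A us + B zs)‖ ^ 2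
        + γ ^ 2 * ‖C zk - C zs‖ ^ 2 := by
  have hus : us = zs := by
    have h := h3s
    rw [add_sub_assoc, left_eq_add, sub_eq_zero] at h
    exact h
  have hz : zk - zs = (vk - vs) - γ • (B zk - B zs) := by
    conv_lhs => rw [h1, h1s]
    module
  have hu : uk1 - us = (vk - vs) - (2*γ) • (B zk - B zs) - γ • (C zk - C zs)
      - γ • (A uk1 - A us) := by
    conv_lhs => rw [h2, h2s]
    module
  have hv : vk1 - vs = (vk - vs) - γ • ((A uk1 - A us) + (B zk - B zs))
      - γ • (C zk - C zs) := by
    have step : vk1 - vs = (vk - vs) + (uk1 - us) - (zk - zs) := by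
      rw [h3, hus]
      module
    rw [step, hu, hz]
    module
  have habs : A uk1 + B zk - (A us + B zs) = (A uk1 - A us) + (B zk - B zs) := by
    abel
  rw [hv, hz, hu, habs]
  exact davis_yin_key (vk - vs) (A uk1 - A us) (B zk - B zs) (C zk - C zs) γ
end

section
/- Let X, Y be finite-dimensional real inner product spaces, F : X → ℝ convex and ν-smooth (ν > 0), L : X → Y linear, γ, τ > 0 with γτ‖L‖² < 1. Let K = (γ/τ)I - γ² L*L on X and Q(x,y) = (Kx, y) on Z = X × Y. Define the operator Q⁻¹C : Z → Z by (x,y) ↦ (K⁻¹∇F(x), 0). Then Q⁻¹C is ξ-cocoercive with respect to the inner product ⟨·,·⟩_Q induced by Q, with ξ = (γ/τ - γ²‖L‖²)/ν; that is, for all z = (x,y), z' = (x',y') in Z: ξ‖Q⁻¹C(z) - Q⁻¹C(z')‖²_Q ≤ ⟨Q⁻¹C(z) - Q⁻¹C(z'), z - z'⟩_Q. -/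
/-!
Write `u = ∇F x - ∇F x'` and `v = K⁻¹ u`, so that `Q⁻¹C z - Q⁻¹C z' = (v, 0)` and the claim
reads `ξ ⟪u, v⟫ ≤ ⟪u, x - x'⟫`. With `λ = γ/τ - γ²‖L‖² ≥ 0` we have
`λ ‖v‖² ≤ ⟪K v, v⟫ = ⟪u, v⟫`, which forces `λ ⟪u, v⟫ ≤ ‖u‖²`; the Baillon–Haddad inequality
`‖u‖² ≤ ν ⟪u, x - x'⟫` finishes. The latter follows by adding to its own swap the inequality
`F a + ⟪∇F a, b - a⟫ + ‖∇F b - ∇F a‖² / (2ν) ≤ F b`, obtained from the tangent-plane inequality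
at `a`, evaluated at the gradient step `b - ν⁻¹ (∇F b - ∇F a)`, and the descent lemma at `b`.
-/

open scoped InnerProductSpace
open Set

section Gradient

variable {X : Type*} [NormedAddCommGroup X] [InnerProductSpace ℝ X] [CompleteSpace X]

theorem HasGradientAt.hasDerivAt_add_smul {F : X → ℝ} {g x v : X} {t : ℝ}
    (hF : HasGradientAt F g (x + t • v)) :
    HasDerivAt (fun s : ℝ => F (x + s • v)) ⟪g, v⟫_ℝ t := by
  have hline : HasDerivAt (fun s : ℝ => x + s • v) v t := by
    simpa using ((hasDerivAt_id t).smul_const v).const_add x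
  simpa [Function.comp_def] using hF.hasFDerivAt.comp_hasDerivAt t hline

theorem ConvexOn.add_inner_le_of_hasGradientAt {F : X → ℝ} (hF : ConvexOn ℝ univ F) {g x : X}
    (hg : HasGradientAt F g x) (z : X) : F x + ⟪g, z - x⟫_ℝ ≤ F z := by
  have hline : ConvexOn ℝ univ (fun s : ℝ => F (x + s • (z - x))) := by
    simpa [Function.comp_def, AffineMap.lineMap_apply_module', add_comm] using
      hF.comp_affineMap (AffineMap.lineMap x z)
  have := hline.le_slope_of_hasDerivAt (mem_univ 0) (mem_univ 1) zero_lt_one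
    (HasGradientAt.hasDerivAt_add_smul (t := 0) (by simpa using hg))
  simp only [slope_def_field, one_smul, add_sub_cancel, zero_smul, add_zero, sub_zero, div_one]
    at this
  linarith

theorem apply_add_le_of_lipschitz_gradient {F : X → ℝ} {gradF : X → X} {ν : ℝ}
    (hgrad : ∀ x, HasGradientAt F (gradF x) x)
    (hsmooth : ∀ x x' : X, ‖gradF x - gradF x'‖ ≤ ν * ‖x - x'‖) (x v : X) :
    F (x + v) ≤ F x + ⟪gradF x, v⟫_ℝ + ν / 2 * ‖v‖ ^ 2 := by
  set h : ℝ → ℝ := fun t => F (x + t • v) - t * ⟪gradF x, v⟫_ℝ - ν / 2 * t ^ 2 * ‖v‖ ^ 2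
  have hderiv : ∀ t : ℝ,
      HasDerivAt h (⟪gradF (x + t • v) - gradF x, v⟫_ℝ - ν * t * ‖v‖ ^ 2) t := by
    intro t
    have := ((hgrad (x + t • v)).hasDerivAt_add_smul.sub
      ((hasDerivAt_id t).mul_const ⟪gradF x, v⟫_ℝ)).sub
        (((hasDerivAt_pow 2 t).const_mul (ν / 2)).mul_const (‖v‖ ^ 2))
    refine this.congr_deriv ?_
    rw [inner_sub_left]
    push_cast
    ring
  have hslope : ∀ t ∈ interior (Icc (0 : ℝ) 1), deriv h t ≤ 0 := by
    intro t ht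
    rw [interior_Icc] at ht
    have hlip : ‖gradF (x + t • v) - gradF x‖ ≤ ν * (t * ‖v‖) := by
      simpa [norm_smul, abs_of_pos ht.1] using hsmooth (x + t • v) x
    rw [(hderiv t).deriv]
    nlinarith [real_inner_le_norm (gradF (x + t • v) - gradF x) v, norm_nonneg v]
  have hmono : AntitoneOn h (Icc 0 1) :=
    antitoneOn_of_deriv_nonpos (convex_Icc 0 1)
      (fun t _ => (hderiv t).continuousAt.continuousWithinAt)
      (fun t _ => (hderiv t).differentiableAt.differentiableWithinAt) hslope
  have := hmono (left_mem_Icc.2 zero_le_one) (right_mem_Icc.2 zero_le_one) zero_le_one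
  simp only [h, one_smul, one_mul, one_pow, mul_one, zero_smul, add_zero, zero_mul, sub_zero,
    ne_eq, OfNat.ofNat_ne_zero, not_false_eq_true, zero_pow, mul_zero] at this
  linarith

theorem ConvexOn.add_inner_add_norm_sub_gradient_sq_le {F : X → ℝ} (hF : ConvexOn ℝ univ F)
    {gradF : X → X} {ν : ℝ} (hν : 0 < ν) (hgrad : ∀ x, HasGradientAt F (gradF x) x)
    (hsmooth : ∀ x x' : X, ‖gradF x - gradF x'‖ ≤ ν * ‖x - x'‖) (a b : X) :
    F a + ⟪gradF a, b - a⟫_ℝ + ‖gradF b - gradF a‖ ^ 2 / (2 * ν) ≤ F b := by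
  set w := gradF b - gradF a
  have hdescent := apply_add_le_of_lipschitz_gradient hgrad hsmooth b (-ν⁻¹ • w)
  have htangent := hF.add_inner_le_of_hasGradientAt (hgrad a) (b + -ν⁻¹ • w)
  have hgb : gradF b = gradF a + w := by simp [w]
  rw [hgb, norm_smul, mul_pow, inner_add_left, real_inner_smul_right, real_inner_smul_right,
    real_inner_self_eq_norm_sq] at hdescent
  rw [add_sub_right_comm, inner_add_right, real_inner_smul_right] at htangent
  have hstep : ν / 2 * (‖-ν⁻¹‖ ^ 2 * ‖w‖ ^ 2) = ‖w‖ ^ 2 / (2 * ν) := by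
    rw [norm_neg, Real.norm_of_nonneg (inv_nonneg.2 hν.le)]
    field_simp
  have hsplit : ν⁻¹ * ‖w‖ ^ 2 = ‖w‖ ^ 2 / (2 * ν) + ‖w‖ ^ 2 / (2 * ν) := by
    field_simp
    ring
  linarith

theorem ConvexOn.norm_sub_gradient_sq_le_mul_inner {F : X → ℝ} (hF : ConvexOn ℝ univ F)
    {gradF : X → X} {ν : ℝ} (hν : 0 < ν) (hgrad : ∀ x, HasGradientAt F (gradF x) x)
    (hsmooth : ∀ x x' : X, ‖gradF x - gradF x'‖ ≤ ν * ‖x - x'‖) (x x' : X) :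
    ‖gradF x - gradF x'‖ ^ 2 ≤ ν * ⟪gradF x - gradF x', x - x'⟫_ℝ := by
  have h₁ := hF.add_inner_add_norm_sub_gradient_sq_le hν hgrad hsmooth x x'
  have h₂ := hF.add_inner_add_norm_sub_gradient_sq_le hν hgrad hsmooth x' x
  rw [norm_sub_rev] at h₁
  have hsum : ‖gradF x - gradF x'‖ ^ 2 / ν ≤ ⟪gradF x - gradF x', x - x'⟫_ℝ := by
    have hinner :
        ⟪gradF x - gradF x', x - x'⟫_ℝ = -⟪gradF x, x' - x⟫_ℝ - ⟪gradF x', x - x'⟫_ℝ := by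
      rw [inner_sub_left, ← neg_sub x x', inner_neg_right]
      ring
    have hsplit : ‖gradF x - gradF x'‖ ^ 2 / ν
        = ‖gradF x - gradF x'‖ ^ 2 / (2 * ν) + ‖gradF x - gradF x'‖ ^ 2 / (2 * ν) := by
      field_simp
      ring
    linarith
  rwa [div_le_iff₀' hν] at hsum

end Gradient

theorem mul_norm_sq_le_inner_smul_sub_smul_adjoint_apply
    {X Y : Type*} [NormedAddCommGroup X] [InnerProductSpace ℝ X] [CompleteSpace X]
    [NormedAddCommGroup Y] [InnerProductSpace ℝ Y] [CompleteSpace Y]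
    (L : X →L[ℝ] Y) {c d : ℝ} (hd : 0 ≤ d) (v : X) :
    (c - d * ‖L‖ ^ 2) * ‖v‖ ^ 2 ≤ ⟪c • v - d • ContinuousLinearMap.adjoint L (L v), v⟫_ℝ := by
  rw [inner_sub_left, real_inner_smul_left, real_inner_smul_left,
    ContinuousLinearMap.adjoint_inner_left, real_inner_self_eq_norm_sq,
    real_inner_self_eq_norm_sq]
  have hLv : ‖L v‖ ^ 2 ≤ ‖L‖ ^ 2 * ‖v‖ ^ 2 := by
    rw [← mul_pow]
    exact pow_le_pow_left₀ (norm_nonneg _) (L.le_opNorm v) 2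
  nlinarith [mul_le_mul_of_nonneg_left hLv hd]

theorem mul_inner_le_norm_sq_of_mul_norm_sq_le_inner {X : Type*} [NormedAddCommGroup X]
    [InnerProductSpace ℝ X] {u v : X} {c : ℝ} (hc : 0 ≤ c) (h : c * ‖v‖ ^ 2 ≤ ⟪u, v⟫_ℝ) :
    c * ⟪u, v⟫_ℝ ≤ ‖u‖ ^ 2 := by
  -- `2 c ⟪u, v⟫ ≤ 2 c ‖u‖ ‖v‖ ≤ ‖u‖² + c² ‖v‖² ≤ ‖u‖² + c ⟪u, v⟫`
  nlinarith [mul_le_mul_of_nonneg_left (real_inner_le_norm u v) hc, sq_nonneg (‖u‖ - c * ‖v‖),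
    mul_le_mul_of_nonneg_left h hc]

/-- Cocoercivity parameter of `Q⁻¹C` in the `Q`-metric for the Condat--Vũ algorithm. -/
theorem Qinv_C_cocoercive
    {X Y : Type*} [NormedAddCommGroup X] [InnerProductSpace ℝ X] [FiniteDimensional ℝ X]
    [NormedAddCommGroup Y] [InnerProductSpace ℝ Y] [FiniteDimensional ℝ Y]
    (L : X →L[ℝ] Y) (γ τ ν : ℝ) (hγ : 0 < γ) (hτ : 0 < τ) (hν : 0 < ν)
    (hQ : γ * τ * ‖L‖ ^ 2 < 1)
    (F : X → ℝ) (hF : ConvexOn ℝ Set.univ F)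
    (gradF : X → X) (hgrad : ∀ x, HasGradientAt F (gradF x) x)
    (hsmooth : ∀ x x' : X, ‖gradF x - gradF x'‖ ≤ ν * ‖x - x'‖)
    (K : X →L[ℝ] X)
    (hK : ∀ v : X, K v = (γ / τ) • v - (γ ^ 2) • ContinuousLinearMap.adjoint L (L v))
    (Kinv : X →L[ℝ] X) (hKinv : ∀ v : X, K (Kinv v) = v ∧ Kinv (K v) = v) :
    ∀ (x x' : X) (y y' : Y),
      ((γ / τ - γ ^ 2 * ‖L‖ ^ 2) / ν)
          * (⟪K (Kinv (gradF x) - Kinv (gradF x')), Kinv (gradF x) - Kinv (gradF x')⟫_ℝ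
              + ⟪(0 : Y), (0 : Y)⟫_ℝ)
        ≤ ⟪K (Kinv (gradF x) - Kinv (gradF x')), x - x'⟫_ℝ + ⟪(0 : Y), y - y'⟫_ℝ := by
  intro x x' y y'
  set u := gradF x - gradF x'
  set v := Kinv (gradF x) - Kinv (gradF x')
  have hKv : K v = u := by simp only [v, u, map_sub, (hKinv _).1]
  have hlam : 0 ≤ γ / τ - γ ^ 2 * ‖L‖ ^ 2 := by
    have : γ / τ - γ ^ 2 * ‖L‖ ^ 2 = γ / τ * (1 - γ * τ * ‖L‖ ^ 2) := by
      field_simp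
    rw [this]
    exact mul_nonneg (div_pos hγ hτ).le (sub_nonneg.2 hQ.le)
  have hquad : (γ / τ - γ ^ 2 * ‖L‖ ^ 2) * ‖v‖ ^ 2 ≤ ⟪u, v⟫_ℝ := by
    rw [← hKv, hK]
    exact mul_norm_sq_le_inner_smul_sub_smul_adjoint_apply L (sq_nonneg γ) v
  have hcoco := hF.norm_sub_gradient_sq_le_mul_inner hν hgrad hsmooth x x'
  rw [inner_zero_left, inner_zero_left, add_zero, add_zero, hKv, div_mul_eq_mul_div,
    div_le_iff₀ hν]
  calc (γ / τ - γ ^ 2 * ‖L‖ ^ 2) * ⟪u, v⟫_ℝ ≤ ‖u‖ ^ 2 :=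
        mul_inner_le_norm_sq_of_mul_norm_sq_le_inner hlam hquad
    _ ≤ ν * ⟪u, x - x'⟫_ℝ := hcoco
    _ = ⟪u, x - x'⟫_ℝ * ν := mul_comm _ _
end

section
/- Let X, Y be finite-dimensional real inner product spaces, L : X → Y linear, γ, τ > 0. The block operator P on X × Y defined by P(x,y) = (x, (γ/τ)y - γ² L L* y) is symmetric, and P is positive definite if and only if γτ‖L‖² < 1. -/
open scoped InnerProductSpace

open ContinuousLinearMap in
private lemma key_iff {X Y : Type*} [NormedAddCommGroup X] [InnerProductSpace ℝ X]
    [FiniteDimensional ℝ X]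
    [NormedAddCommGroup Y] [InnerProductSpace ℝ Y] [FiniteDimensional ℝ Y]
    (L : X →L[ℝ] Y) (c : ℝ) (hc : 0 < c) :
    (∀ y : Y, y ≠ 0 → c * ‖adjoint L y‖ ^ 2 < ‖y‖ ^ 2) ↔ c * ‖L‖ ^ 2 < 1 := by
  have hnorm : ‖adjoint L‖ = ‖L‖ :=
    (ContinuousLinearMap.adjoint : (X →L[ℝ] Y) ≃ₗᵢ⋆[ℝ] (Y →L[ℝ] X)).norm_map L
  constructor
  · intro h
    by_cases hY : ∃ y : Y, y ≠ 0
    · obtain ⟨y, hy⟩ := hY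
      have hyn : ‖y‖ ≠ 0 := norm_ne_zero_iff.mpr hy
      have hy₀ : ‖(‖y‖)⁻¹ • y‖ = 1 := by
        simp [norm_smul, inv_mul_cancel₀ hyn]
      have hsphere : IsCompact (Metric.sphere (0 : Y) 1) := isCompact_sphere 0 1
      have hcont : ContinuousOn (fun v => ‖adjoint L v‖) (Metric.sphere (0 : Y) 1) :=
        (continuous_norm.comp (adjoint L).continuous).continuousOn
      obtain ⟨ym, hym, hmax⟩ := hsphere.exists_isMaxOn
        ⟨(‖y‖)⁻¹ • y, by simp [hy₀]⟩ hcont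
      have hymn : ‖ym‖ = 1 := by simpa using hym
      have hop : ‖adjoint L‖ ≤ ‖adjoint L ym‖ := by
        refine ContinuousLinearMap.opNorm_le_bound _ (norm_nonneg _) fun v => ?_
        rcases eq_or_ne v 0 with rfl | hv
        · simp
        · have hvn : ‖v‖ ≠ 0 := norm_ne_zero_iff.mpr hv
          have hmem : ((‖v‖)⁻¹ • v) ∈ Metric.sphere (0 : Y) 1 := by
            simp [norm_smul, inv_mul_cancel₀ hvn]
          have h2 := hmax hmem
          simp only [Set.mem_setOf_eq, map_smul, norm_smul, norm_inv, norm_norm] at h2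
          calc ‖adjoint L v‖ = ‖v‖ * (‖v‖⁻¹ * ‖adjoint L v‖) := by field_simp
            _ ≤ ‖v‖ * ‖adjoint L ym‖ := mul_le_mul_of_nonneg_left h2 (norm_nonneg v)
            _ = ‖adjoint L ym‖ * ‖v‖ := mul_comm _ _
      have hym0 : ym ≠ 0 := by
        intro h0; rw [h0, norm_zero] at hymn; norm_num at hymn
      have hlt := h ym hym0
      rw [hymn] at hlt
      have hLle : ‖L‖ ≤ ‖adjoint L ym‖ := hnorm ▸ hop
      have : c * ‖L‖ ^ 2 ≤ c * ‖adjoint L ym‖ ^ 2 := by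
        have h2 : ‖L‖ ^ 2 ≤ ‖adjoint L ym‖ ^ 2 := by nlinarith [norm_nonneg L]
        exact mul_le_mul_of_nonneg_left h2 hc.le
      linarith
    · push_neg at hY
      have : L = 0 := by
        ext x
        refine ext_inner_left ℝ fun w => ?_
        rw [hY w]
        simp
      simp [this, hc]
  · intro h y hy
    have h1 : ‖adjoint L y‖ ≤ ‖L‖ * ‖y‖ := by
      have := (adjoint L).le_opNorm y
      rwa [hnorm] at this
    have hy2 : 0 < ‖y‖ ^ 2 := by
      have := norm_pos_iff.mpr hy
      positivity
    have h1sq : ‖adjoint L y‖ ^ 2 ≤ ‖L‖ ^ 2 * ‖y‖ ^ 2 := by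
      nlinarith [norm_nonneg (adjoint L y), norm_nonneg L, norm_nonneg y]
    calc c * ‖adjoint L y‖ ^ 2 ≤ c * (‖L‖ ^ 2 * ‖y‖ ^ 2) :=
          mul_le_mul_of_nonneg_left h1sq hc.le
      _ = (c * ‖L‖ ^ 2) * ‖y‖ ^ 2 := by ring
      _ < 1 * ‖y‖ ^ 2 := mul_lt_mul_of_pos_right h hy2
      _ = ‖y‖ ^ 2 := one_mul _

/-- The preconditioner `P(x,y) = (x, (γ/τ)y - γ² L L* y)` is symmetric, and it is
positive definite iff `γτ‖L‖² < 1`. -/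
theorem preconditioner_P_symm_posdef_iff
    {X Y : Type*} [NormedAddCommGroup X] [InnerProductSpace ℝ X] [FiniteDimensional ℝ X]
    [NormedAddCommGroup Y] [InnerProductSpace ℝ Y] [FiniteDimensional ℝ Y]
    (L : X →L[ℝ] Y) (γ τ : ℝ) (hγ : 0 < γ) (hτ : 0 < τ)
    (P : X × Y → X × Y)
    (hP : ∀ z : X × Y,
      P z = (z.1, (γ / τ) • z.2 - (γ ^ 2) • L (ContinuousLinearMap.adjoint L z.2))) :
    (∀ z w : X × Y,
        ⟪(P z).1, w.1⟫_ℝ + ⟪(P z).2, w.2⟫_ℝ = ⟪z.1, (P w).1⟫_ℝ + ⟪z.2, (P w).2⟫_ℝ)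
      ∧ ((∀ z : X × Y, z ≠ 0 → 0 < ⟪(P z).1, z.1⟫_ℝ + ⟪(P z).2, z.2⟫_ℝ)
          ↔ γ * τ * ‖L‖ ^ 2 < 1) := by
  have hcross : ∀ (u : Y) (w : Y),
      ⟪L (ContinuousLinearMap.adjoint L u), w⟫_ℝ
        = ⟪ContinuousLinearMap.adjoint L u, ContinuousLinearMap.adjoint L w⟫_ℝ := by
    intro u w
    rw [← ContinuousLinearMap.adjoint_inner_right L (ContinuousLinearMap.adjoint L u) w]
  have hquad : ∀ z : X × Y, ⟪(P z).1, z.1⟫_ℝ + ⟪(P z).2, z.2⟫_ℝ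
      = ‖z.1‖ ^ 2 + (γ / τ) * ‖z.2‖ ^ 2
        - γ ^ 2 * ‖ContinuousLinearMap.adjoint L z.2‖ ^ 2 := by
    intro z
    rw [hP]
    show ⟪z.1, z.1⟫_ℝ + ⟪(γ / τ) • z.2 - (γ ^ 2) • L (ContinuousLinearMap.adjoint L z.2), z.2⟫_ℝ
        = _
    rw [inner_sub_left, real_inner_smul_left, real_inner_smul_left, hcross,
      real_inner_self_eq_norm_sq, real_inner_self_eq_norm_sq, real_inner_self_eq_norm_sq]
    ring
  constructor
  · intro z w
    rw [hP z, hP w]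
    show ⟪z.1, w.1⟫_ℝ + ⟪(γ / τ) • z.2 - (γ ^ 2) • L (ContinuousLinearMap.adjoint L z.2), w.2⟫_ℝ
        = ⟪z.1, w.1⟫_ℝ
          + ⟪z.2, (γ / τ) • w.2 - (γ ^ 2) • L (ContinuousLinearMap.adjoint L w.2)⟫_ℝ
    have hsym2 : ⟪L (ContinuousLinearMap.adjoint L z.2), w.2⟫_ℝ
        = ⟪z.2, L (ContinuousLinearMap.adjoint L w.2)⟫_ℝ := by
      rw [hcross]
      exact ContinuousLinearMap.adjoint_inner_left L (ContinuousLinearMap.adjoint L w.2) z.2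
    rw [inner_sub_left, inner_sub_right, real_inner_smul_left, real_inner_smul_left,
      real_inner_smul_right, real_inner_smul_right, hsym2]
  · have hc : 0 < γ * τ := mul_pos hγ hτ
    have hkey := key_iff L (γ * τ) hc
    constructor
    · intro hpos
      rw [← hkey]
      intro y hy
      have hz : ((0 : X), y) ≠ (0 : X × Y) := by
        simp [Prod.ext_iff, hy]
      have h0 := hpos ((0 : X), y) hz
      rw [hquad] at h0
      simp only [norm_zero] at h0
      have h2 : 0 < (γ / τ) * ‖y‖ ^ 2 - γ ^ 2 * ‖ContinuousLinearMap.adjoint L y‖ ^ 2 := by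
        nlinarith
      have h3 := mul_pos hτ h2
      have h4 : τ * ((γ / τ) * ‖y‖ ^ 2) = γ * ‖y‖ ^ 2 := by
        field_simp
      rw [mul_sub, h4] at h3
      nlinarith
    · intro h z hz
      have hy := hkey.mpr h
      rw [hquad]
      rcases eq_or_ne z.2 0 with h2 | h2
      · have h1 : z.1 ≠ 0 := by
          intro h1; exact hz (Prod.ext h1 h2)
        have hpos1 : 0 < ‖z.1‖ ^ 2 := by
          have := norm_pos_iff.mpr h1; positivity
        simp [h2, hpos1]
      · have hlt := hy z.2 h2
        have h3 : γ ^ 2 * ‖ContinuousLinearMap.adjoint L z.2‖ ^ 2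
            < (γ / τ) * ‖z.2‖ ^ 2 := by
          rw [div_mul_eq_mul_div, lt_div_iff₀ hτ]
          nlinarith
        nlinarith [sq_nonneg ‖z.1‖]
end
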